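/- For every real t, |cos t − (sin t)/t| < 6/5 (with (sin t)/t interpreted as 1 at t = 0). -/

import Mathlib

/-!
For `|t| ≤ π / 2` both `cos t` and `sinc t` lie in `[0, 1]`, so their difference has absolute value
at most `1`. For `|t| > π / 2`, Cauchy–Schwarz gives `(cos t - t⁻¹ sin t)² ≤ 1 + t⁻²`, and
`t⁻² < 4 / π² < 11 / 25`.
-/

open Real

lemma Real.sinc_abs (x : ℝ) : sinc |x| = sinc x := by
  rcases abs_choice x with h | h <;> simp [h]

lemma Real.sinc_nonneg_of_abs_le_pi {x : ℝ} (hx : |x| ≤ π) : 0 ≤ sinc x := by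
  rw [← sinc_abs]
  rcases eq_or_ne |x| 0 with h | h
  · simp [h]
  · rw [sinc_of_ne_zero h]
    exact div_nonneg (sin_nonneg_of_nonneg_of_le_pi (abs_nonneg x) hx) (abs_nonneg x)

lemma Real.sq_cos_sub_mul_sin_le (t u : ℝ) : (cos t - u * sin t) ^ 2 ≤ 1 + u ^ 2 := by
  nlinarith [sq_nonneg (u * cos t + sin t), sin_sq_add_cos_sq t]

lemma Real.abs_cos_sub_sinc_le_one_of_abs_le_pi_div_two {t : ℝ} (ht : |t| ≤ π / 2) :
    |cos t - sinc t| ≤ 1 := by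
  obtain ⟨hlo, hhi⟩ := abs_le.mp ht
  have hcos : 0 ≤ cos t := cos_nonneg_of_mem_Icc ⟨hlo, hhi⟩
  have hsinc : 0 ≤ sinc t := sinc_nonneg_of_abs_le_pi (by linarith [pi_pos])
  exact abs_sub_le_of_nonneg_of_le hcos (cos_le_one t) hsinc (sinc_le_one t)

lemma Real.abs_cos_sub_sinc_lt_of_pi_div_two_lt_abs {t : ℝ} (ht : π / 2 < |t|) :
    |cos t - sinc t| < 6 / 5 := by
  have ht0 : t ≠ 0 := by
    rintro rfl
    rw [abs_zero] at ht
    linarith [pi_pos]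
  have hinv : t⁻¹ ^ 2 < 11 / 25 := by
    have hsq : 25 / 11 < |t| ^ 2 := by nlinarith [pi_gt_d2]
    rw [inv_pow, ← sq_abs]
    exact inv_lt_of_inv_lt₀ (by norm_num) (by simpa using hsq)
  rw [sinc_of_ne_zero ht0, div_eq_inv_mul]
  refine abs_lt_of_sq_lt_sq ?_ (by norm_num)
  calc (cos t - t⁻¹ * sin t) ^ 2 ≤ 1 + t⁻¹ ^ 2 := sq_cos_sub_mul_sin_le t t⁻¹
    _ < (6 / 5) ^ 2 := by linarith

theorem abs_cos_sub_sinc_lt (t : ℝ) :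
    |Real.cos t - (if t = 0 then 1 else Real.sin t / t)| < 6 / 5 := by
  rw [← sinc_apply]
  rcases le_or_gt |t| (π / 2) with hle | hgt
  · exact (abs_cos_sub_sinc_le_one_of_abs_le_pi_div_two hle).trans_lt (by norm_num)
  · exact abs_cos_sub_sinc_lt_of_pi_div_two_lt_abs hgt
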